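/- (Primal recovery from the dual solution.) Let ŷ ∈ ℝ^d, let V ∈ ℝ^{d×d} be symmetric positive definite, let E ∈ ℝ^{k×d}, and let γ ≥ 0. Suppose v* minimizes the dual objective g(v) = ½ (ŷ − Eᵀv)ᵀ V⁻¹ (ŷ − Eᵀv) over the box B = {v ∈ ℝ^k : maxᵢ|vᵢ| ≤ γ}. Then z* = V⁻¹(ŷ − Eᵀv*) is a global minimizer over ℝ^d of the primal objective −ŷᵀz + ½ zᵀVz + γ‖Ez‖₁. -/

import Mathlib

/-!
Put `w = ŷ - Eᵀv*` and `z* = V⁻¹w`. Minimality of `v*` for the dual over the (convex) box gives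
the first-order condition `(v - v*)ᵀEz* ≤ 0` on the box, i.e. `v*` maximizes `v ↦ vᵀEz*` there;
this maximum is `γ‖Ez*‖₁`, which is complementary slackness. For any `z`, `vᵀEz ≤ γ‖Ez‖₁` on the
box bounds the primal objective below by `½zᵀVz - wᵀz ≥ -½wᵀz*`, and by complementary slackness
the primal objective at `z*` equals `-½wᵀz*`.
-/

open Matrix Filter Topology

lemma nonpos_of_forall_le_mul {a q : ℝ} (h : ∀ t : ℝ, 0 < t → t ≤ 1 → a ≤ t * q) : a ≤ 0 := by
  have hlim : Tendsto (fun t : ℝ => t * q) (𝓝[>] 0) (𝓝 0) := by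
    simpa using ((continuous_mul_const q).tendsto 0).mono_left nhdsWithin_le_nhds
  refine ge_of_tendsto hlim ?_
  filter_upwards [Ioc_mem_nhdsGT one_pos] with t ht using h t ht.1 ht.2

lemma convex_setOf_forall_abs_le {ι : Type*} (γ : ℝ) : Convex ℝ {v : ι → ℝ | ∀ i, |v i| ≤ γ} := by
  have : {v : ι → ℝ | ∀ i, |v i| ≤ γ} = Set.univ.pi fun _ => Set.Icc (-γ) γ := by
    ext v; simp [abs_le, Pi.le_def, forall_and]
  exact this ▸ convex_pi fun _ _ => convex_Icc _ _

section

variable {ι : Type*} [Fintype ι]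

lemma dotProduct_le_mul_sum_abs {γ : ℝ} {v : ι → ℝ} (hv : ∀ i, |v i| ≤ γ) (x : ι → ℝ) :
    v ⬝ᵥ x ≤ γ * ∑ i, |x i| := by
  rw [Finset.mul_sum]
  refine Finset.sum_le_sum fun i _ => ?_
  calc v i * x i ≤ |v i| * |x i| := abs_mul (v i) (x i) ▸ le_abs_self _
    _ ≤ γ * |x i| := mul_le_mul_of_nonneg_right (hv i) (abs_nonneg _)

lemma exists_forall_abs_le_dotProduct_eq {γ : ℝ} (hγ : 0 ≤ γ) (x : ι → ℝ) :
    ∃ v : ι → ℝ, (∀ i, |v i| ≤ γ) ∧ v ⬝ᵥ x = γ * ∑ i, |x i| := by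
  refine ⟨fun i => γ * SignType.sign (x i), fun i => ?_, ?_⟩
  · rw [abs_mul, abs_of_nonneg hγ]
    refine mul_le_of_le_one_right hγ ?_
    cases SignType.sign (x i) <;> simp
  · simp only [dotProduct, Finset.mul_sum, mul_assoc, sign_mul_self]

lemma dotProduct_eq_mul_sum_abs_of_isMaxOn {γ : ℝ} (hγ : 0 ≤ γ) {v₀ x : ι → ℝ}
    (hv₀ : ∀ i, |v₀ i| ≤ γ) (hmax : IsMaxOn (· ⬝ᵥ x) {v | ∀ i, |v i| ≤ γ} v₀) :
    v₀ ⬝ᵥ x = γ * ∑ i, |x i| := by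
  obtain ⟨v, hv, hvx⟩ := exists_forall_abs_le_dotProduct_eq hγ x
  exact (dotProduct_le_mul_sum_abs hv₀ x).antisymm (hvx ▸ isMaxOn_iff.1 hmax v hv)

end

namespace Matrix

variable {ι κ : Type*} [Fintype ι] [Fintype κ]

lemma IsSymm.dotProduct_mulVec_comm {R : Type*} [CommSemiring R] {M : Matrix ι ι R}
    (hM : M.IsSymm) (x y : ι → R) : x ⬝ᵥ M *ᵥ y = y ⬝ᵥ M *ᵥ x := by
  rw [← dotProduct_transpose_mulVec, hM.eq]

lemma IsSymm.sub_smul_dotProduct_mulVec_sub_smul {R : Type*} [CommRing R] {M : Matrix ι ι R}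
    (hM : M.IsSymm) (w p : ι → R) (t : R) :
    (w - t • p) ⬝ᵥ M *ᵥ (w - t • p) =
      w ⬝ᵥ M *ᵥ w - 2 * t * (p ⬝ᵥ M *ᵥ w) + t ^ 2 * (p ⬝ᵥ M *ᵥ p) := by
  simp only [mulVec_sub, mulVec_smul, sub_dotProduct, dotProduct_sub, smul_dotProduct,
    dotProduct_smul, smul_eq_mul, hM.dotProduct_mulVec_comm w p]
  ring

lemma IsSymm.dotProduct_mulVec_nonpos_of_forall_le {M : Matrix ι ι ℝ} (hM : M.IsSymm)
    {w p : ι → ℝ}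
    (h : ∀ t : ℝ, 0 < t → t ≤ 1 → w ⬝ᵥ M *ᵥ w ≤ (w - t • p) ⬝ᵥ M *ᵥ (w - t • p)) :
    p ⬝ᵥ M *ᵥ w ≤ 0 := by
  refine nonpos_of_forall_le_mul (q := (p ⬝ᵥ M *ᵥ p) / 2) fun t ht ht1 => ?_
  have h2 := h t ht ht1
  rw [hM.sub_smul_dotProduct_mulVec_sub_smul] at h2
  have : t * (2 * (p ⬝ᵥ M *ᵥ w)) ≤ t * (t * (p ⬝ᵥ M *ᵥ p)) := by linarith
  linarith [le_of_mul_le_mul_left this ht]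

/-- First-order optimality condition for minimizing a quadratic form of an affine map over a
convex set; `-2 Aᵀ M (b - A v₀)` is the gradient of the objective at `v₀`. -/
lemma IsSymm.dotProduct_mulVec_nonpos_of_isMinOn {M : Matrix ι ι ℝ} (hM : M.IsSymm)
    (A : Matrix ι κ ℝ) (b : ι → ℝ) {S : Set (κ → ℝ)} (hS : Convex ℝ S) {v₀ v : κ → ℝ}
    (hmin : IsMinOn (fun v => (b - A *ᵥ v) ⬝ᵥ M *ᵥ (b - A *ᵥ v)) S v₀) (hv₀ : v₀ ∈ S)
    (hv : v ∈ S) : (v - v₀) ⬝ᵥ Aᵀ *ᵥ M *ᵥ (b - A *ᵥ v₀) ≤ 0 := by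
  rw [dotProduct_transpose_mulVec, dotProduct_comm]
  refine hM.dotProduct_mulVec_nonpos_of_forall_le fun t ht ht1 => ?_
  have hseg : b - A *ᵥ (v₀ + t • (v - v₀)) = b - A *ᵥ v₀ - t • A *ᵥ (v - v₀) := by
    rw [mulVec_add, mulVec_smul]; abel
  exact hseg ▸ isMinOn_iff.1 hmin _ (hS.add_smul_sub_mem hv₀ hv ⟨ht.le, ht1⟩)

lemma PosSemidef.neg_half_dotProduct_le_of_mulVec_eq {M : Matrix ι ι ℝ}
    (hM : M.PosSemidef) {x₀ w : ι → ℝ} (hx₀ : M *ᵥ x₀ = w) (z : ι → ℝ) :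
    -(1 / 2) * (w ⬝ᵥ x₀) ≤ (1 / 2) * (z ⬝ᵥ M *ᵥ z) - w ⬝ᵥ z := by
  have hsymm : M.IsSymm := isHermitian_iff_isSymm.1 hM.isHermitian
  have hnonneg : 0 ≤ (z - x₀) ⬝ᵥ M *ᵥ (z - x₀) := by
    simpa using hM.dotProduct_mulVec_nonneg (z - x₀)
  simp only [mulVec_sub, sub_dotProduct, dotProduct_sub, hsymm.dotProduct_mulVec_comm x₀ z,
    hx₀] at hnonneg
  rw [dotProduct_comm w x₀, dotProduct_comm w z]
  linarith

end Matrix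

/-- Primal recovery from the dual solution: if `v*` minimizes the dual objective
`g(v) = ½ (ŷ − Eᵀv)ᵀ V⁻¹ (ŷ − Eᵀv)` over the box `{v : ‖v‖_∞ ≤ γ}`, then
`z* = V⁻¹(ŷ − Eᵀv*)` is a global minimizer of the primal objective
`−ŷᵀz + ½ zᵀVz + γ‖Ez‖₁` over `ℝ^d`. -/
theorem stmt7 (d k : ℕ) (yhat : Fin d → ℝ)
    (V : Matrix (Fin d) (Fin d) ℝ) (hV : V.PosDef)
    (E : Matrix (Fin k) (Fin d) ℝ) (γ : ℝ) (hγ : 0 ≤ γ)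
    (vstar : Fin k → ℝ) (hbox : ∀ i, |vstar i| ≤ γ)
    (hmin : ∀ v : Fin k → ℝ, (∀ i, |v i| ≤ γ) →
      (1 / 2) * ((yhat - Eᵀ.mulVec vstar) ⬝ᵥ V⁻¹.mulVec (yhat - Eᵀ.mulVec vstar)) ≤
        (1 / 2) * ((yhat - Eᵀ.mulVec v) ⬝ᵥ V⁻¹.mulVec (yhat - Eᵀ.mulVec v))) :
    ∀ z : Fin d → ℝ,
      -(yhat ⬝ᵥ V⁻¹.mulVec (yhat - Eᵀ.mulVec vstar)) +
          (1 / 2) * (V⁻¹.mulVec (yhat - Eᵀ.mulVec vstar) ⬝ᵥ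
            V.mulVec (V⁻¹.mulVec (yhat - Eᵀ.mulVec vstar))) +
          γ * ∑ i, |(E.mulVec (V⁻¹.mulVec (yhat - Eᵀ.mulVec vstar))) i| ≤
        -(yhat ⬝ᵥ z) + (1 / 2) * (z ⬝ᵥ V.mulVec z) + γ * ∑ i, |(E.mulVec z) i| := by
  intro z
  set w := yhat - Eᵀ *ᵥ vstar with hw
  set zstar := V⁻¹ *ᵥ w
  have hVzstar : V *ᵥ zstar = w := by
    rw [mulVec_mulVec, mul_nonsing_inv _ ((isUnit_iff_isUnit_det V).1 hV.isUnit), one_mulVec]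
  have hdual : IsMaxOn (· ⬝ᵥ E *ᵥ zstar) {v | ∀ i, |v i| ≤ γ} vstar := by
    refine isMaxOn_iff.2 fun v hv => sub_nonpos.1 ?_
    have hmin' : IsMinOn (fun v => (yhat - Eᵀ *ᵥ v) ⬝ᵥ V⁻¹ *ᵥ (yhat - Eᵀ *ᵥ v))
        {v | ∀ i, |v i| ≤ γ} vstar :=
      isMinOn_iff.2 fun v hv => le_of_mul_le_mul_left (hmin v hv) one_half_pos
    simpa only [transpose_transpose, sub_dotProduct] using
      (isHermitian_iff_isSymm.1 hV.inv.isHermitian).dotProduct_mulVec_nonpos_of_isMinOn Eᵀ yhat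
        (convex_setOf_forall_abs_le γ) hmin' hbox hv
  have hslack := dotProduct_eq_mul_sum_abs_of_isMaxOn hγ hbox hdual
  have hyhat (x : Fin d → ℝ) : yhat ⬝ᵥ x = w ⬝ᵥ x + vstar ⬝ᵥ E *ᵥ x := by
    rw [hw, sub_dotProduct, dotProduct_comm (Eᵀ *ᵥ vstar), dotProduct_transpose_mulVec]; ring
  have hquad := hV.posSemidef.neg_half_dotProduct_le_of_mulVec_eq hVzstar z
  have hbound := dotProduct_le_mul_sum_abs hbox (E *ᵥ z)
  rw [hVzstar, hyhat, hyhat, dotProduct_comm zstar w]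
  linarith
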